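/- The synergy value χ satisfies Normalized-Synergy: for every game (N,v), the synergies of all coalitions sum to zero, i.e., Σ_{C⊆N} χ^N_v(C) = 0. -/

import Mathlib

open Finset

/-- The marginal contribution of player `i` to coalition `C` in a game with
characteristic function `v`: `MC^C_i(N,v) = v(C ∪ {i}) − v(C)`. -/
noncomputable def MC (v : Finset ℕ → ℝ) (C : Finset ℕ) (i : ℕ) : ℝ :=
  v (insert i C) - v C

/-- The Shapley value of player `i` in the game with player set `N` and
characteristic function `v`. -/
noncomputable def shapley (N : Finset ℕ) (v : Finset ℕ → ℝ) (i : ℕ) : ℝ :=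
  ∑ C ∈ (N.erase i).powerset,
    ((C.card.factorial : ℝ) * ((N.card - C.card - 1).factorial : ℝ) /
      (N.card.factorial : ℝ)) * (v (insert i C) - v C)

/-- The average Shapley value `φ̄_i(N,v) = 2^{1−n} Σ_{C ⊆ N, i ∈ C} φ_i(C,v)`. -/
noncomputable def avgShapley (N : Finset ℕ) (v : Finset ℕ → ℝ) (i : ℕ) : ℝ :=
  (2 / 2 ^ N.card : ℝ) * ∑ C ∈ N.powerset.filter (fun C => i ∈ C), shapley C v i

/-- The synergy value `χ^N_v(C) = v(C) − Σ_{i ∈ C} φ̄_i(N,v)`. -/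
noncomputable def synergyValue (N : Finset ℕ) (v : Finset ℕ → ℝ) (C : Finset ℕ) : ℝ :=
  v C - ∑ i ∈ C, avgShapley N v i

/-- Players `i` and `j` are symmetric in the game `(N,v)`. -/
def IsSymmetric (N : Finset ℕ) (v : Finset ℕ → ℝ) (i j : ℕ) : Prop :=
  i ∈ N ∧ j ∈ N ∧ ∀ C ⊆ N \ {i, j}, v (insert i C) = v (insert j C)

/-- Player `i` is a null player in the game `(N,v)`. -/
def IsNullPlayer (N : Finset ℕ) (v : Finset ℕ → ℝ) (i : ℕ) : Prop :=
  i ∈ N ∧ ∀ C ⊆ N, v (insert i C) = v C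

/-- Player `i` is a dummy player in the game `(N,v)`. -/
def IsDummyPlayer (N : Finset ℕ) (v : Finset ℕ → ℝ) (i : ℕ) : Prop :=
  i ∈ N ∧ ∀ C ⊆ N \ {i}, v (insert i C) = v C + v {i}

/-- A game of dummies: every player is a dummy player. -/
def GameOfDummies (N : Finset ℕ) (v : Finset ℕ → ℝ) : Prop :=
  ∀ i ∈ N, IsDummyPlayer N v i

/-! Summing the synergies, `Σ_C χ(C) = Σ_C v(C) − Σ_C Σ_{i∈C} φ̄_i`. Each player `i` lies in
`2^{n−1}` coalitions, which cancels the factor `2^{1−n}` of the average Shapley value, so the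
double sum becomes `Σ_C Σ_{i∈C} φ_i(C,v)`, and by efficiency of the Shapley value in each
subgame this is `Σ_C v(C)`. Efficiency itself is the classical coefficient count: in
`Σ_i φ_i(N,v)` the value `v(S)` appears with weight `|S|·w(|S|−1) − (n−|S|)·w(|S|)`, where
`w(k) = k!(n−k−1)!/n!`, and this vanishes except at `S = N` (and at `S = ∅`, where `v = 0`). -/

theorem Finset.sum_powerset_filter_mem {α β : Type*} [DecidableEq α] [AddCommMonoid β]
    {N : Finset α} {i : α} (hi : i ∈ N) (f : Finset α → β) :
    ∑ S ∈ N.powerset.filter (i ∈ ·), f S = ∑ C ∈ (N.erase i).powerset, f (insert i C) := by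
  refine sum_bij' (fun S _ => S.erase i) (fun C _ => insert i C) (fun S hS => ?_) (fun C hC => ?_)
    (fun S hS => ?_) (fun C hC => ?_) (fun S hS => ?_)
  all_goals simp only [mem_filter, mem_powerset] at *
  · exact erase_subset_erase i hS.1
  · exact ⟨insert_subset hi (hC.trans (erase_subset i N)), mem_insert_self i C⟩
  · exact insert_erase hS.2
  · exact erase_insert fun h => notMem_erase i N (hC h)
  · rw [insert_erase hS.2]

theorem Finset.sum_powerset_sum_comm {α β : Type*} [DecidableEq α] [AddCommMonoid β]
    (N : Finset α) (f : Finset α → α → β) :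
    ∑ C ∈ N.powerset, ∑ i ∈ C, f C i = ∑ i ∈ N, ∑ C ∈ N.powerset.filter (i ∈ ·), f C i :=
  sum_comm' fun C i => by
    simp only [mem_filter, mem_powerset]
    exact ⟨fun h => ⟨⟨h.1, h.2⟩, h.1 h.2⟩, fun h => ⟨h.1.1, h.1.2⟩⟩

theorem Finset.card_powerset_filter_mem {α : Type*} [DecidableEq α] {N : Finset α} {i : α}
    (hi : i ∈ N) : #(N.powerset.filter (i ∈ ·)) = 2 ^ (#N - 1) := by
  rw [card_eq_sum_ones, sum_powerset_filter_mem hi, ← card_eq_sum_ones, card_powerset,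
    card_erase_of_mem hi]

noncomputable def shapleyWeight (n k : ℕ) : ℝ :=
  (k.factorial : ℝ) * ((n - k - 1).factorial : ℝ) / (n.factorial : ℝ)

theorem mul_shapleyWeight_pred_sub_mul_shapleyWeight {n k : ℕ} (hk : 0 < k) (hkn : k ≤ n) :
    k * shapleyWeight n (k - 1) - (n - k : ℕ) * shapleyWeight n k = if k = n then 1 else 0 := by
  unfold shapleyWeight
  split_ifs with hkn'
  · subst hkn'
    have hfac : (k : ℝ) * (k - 1).factorial = k.factorial := by
      exact_mod_cast Nat.mul_factorial_pred hk.ne'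
    simp only [Nat.sub_self, Nat.sub_sub_self hk, Nat.factorial_zero]
    field_simp
    simp [hfac]
  · have hsub : n - (k - 1) - 1 = n - k := by omega
    have hfac : k * (k - 1).factorial * (n - k).factorial
        = (n - k) * (k.factorial * (n - k - 1).factorial) := by
      rw [Nat.mul_factorial_pred hk.ne', mul_left_comm,
        Nat.mul_factorial_pred (Nat.sub_ne_zero_of_lt (lt_of_le_of_ne hkn hkn'))]
    rw [hsub, ← mul_div_assoc, ← mul_div_assoc, ← mul_assoc, ← sub_div, sub_eq_zero_of_eq,
      zero_div]
    exact_mod_cast hfac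

theorem shapley_eq_sum_shapleyWeight (N : Finset ℕ) (v : Finset ℕ → ℝ) (i : ℕ) :
    shapley N v i = ∑ C ∈ (N.erase i).powerset, shapleyWeight #N #C * (v (insert i C) - v C) :=
  rfl

theorem sum_shapley_eq_sum_coeff_mul (N : Finset ℕ) (v : Finset ℕ → ℝ) :
    ∑ i ∈ N, shapley N v i = ∑ S ∈ N.powerset,
      (#S * shapleyWeight #N (#S - 1) - (#N - #S : ℕ) * shapleyWeight #N #S) * v S := by
  simp_rw [shapley_eq_sum_shapleyWeight, mul_sub, sum_sub_distrib, sub_mul, sum_sub_distrib]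
  congr 1
  · calc _ = ∑ i ∈ N, ∑ S ∈ N.powerset.filter (i ∈ ·), shapleyWeight #N (#S - 1) * v S := by
          refine sum_congr rfl fun i hi => ?_
          rw [sum_powerset_filter_mem hi]
          refine sum_congr rfl fun C hC => ?_
          rw [card_insert_of_notMem fun h => notMem_erase i N (mem_powerset.mp hC h),
            Nat.add_sub_cancel]
      _ = ∑ S ∈ N.powerset, ∑ i ∈ S, shapleyWeight #N (#S - 1) * v S :=
          (sum_powerset_sum_comm N _).symm
      _ = _ := by simp only [sum_const, nsmul_eq_mul, mul_assoc]
  · calc _ = ∑ S ∈ N.powerset, ∑ i ∈ N \ S, shapleyWeight #N #S * v S :=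
          sum_comm' fun i S => by
            simp only [mem_powerset, mem_sdiff, subset_erase]
            tauto
      _ = _ := by
          refine sum_congr rfl fun S hS => ?_
          rw [sum_const, nsmul_eq_mul, card_sdiff_of_subset (mem_powerset.mp hS), mul_assoc]

theorem sum_shapley (N : Finset ℕ) (v : Finset ℕ → ℝ) (hv : v ∅ = 0) :
    ∑ i ∈ N, shapley N v i = v N := by
  rw [sum_shapley_eq_sum_coeff_mul, ← sum_ite_eq_of_mem' N.powerset N (fun _ => v N)
    (mem_powerset_self N)]
  refine sum_congr rfl fun S hS => ?_
  obtain rfl | hne := S.eq_empty_or_nonempty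
  · split_ifs with hN
    · simp [← hN, hv]
    · simp [hv]
  · have hSN : #S ≤ #N := card_le_card (mem_powerset.mp hS)
    have hcard : #S = #N ↔ S = N :=
      ⟨fun h => eq_of_subset_of_card_le (mem_powerset.mp hS) h.ge, fun h => h ▸ rfl⟩
    rw [mul_shapleyWeight_pred_sub_mul_shapleyWeight (card_pos.mpr hne) hSN]
    split_ifs with h h' h' <;> simp_all

theorem card_powerset_filter_mem_mul_avgShapley {N : Finset ℕ} {i : ℕ} (hi : i ∈ N)
    (v : Finset ℕ → ℝ) :
    #(N.powerset.filter (i ∈ ·)) * avgShapley N v i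
      = ∑ C ∈ N.powerset.filter (i ∈ ·), shapley C v i := by
  have hpow : ((2 ^ (#N - 1) : ℕ) : ℝ) * (2 / 2 ^ #N) = 1 := by
    rw [← Nat.sub_add_cancel (card_pos.mpr ⟨i, hi⟩), Nat.add_sub_cancel]
    push_cast
    field_simp
    ring
  rw [avgShapley, card_powerset_filter_mem hi, ← mul_assoc, hpow, one_mul]

theorem sum_sum_avgShapley (N : Finset ℕ) (v : Finset ℕ → ℝ) :
    ∑ C ∈ N.powerset, ∑ i ∈ C, avgShapley N v i = ∑ C ∈ N.powerset, ∑ i ∈ C, shapley C v i := by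
  rw [sum_powerset_sum_comm, sum_powerset_sum_comm]
  refine sum_congr rfl fun i hi => ?_
  rw [sum_const, nsmul_eq_mul, card_powerset_filter_mem_mul_avgShapley hi]

/-- the synergy value satisfies Normalized-Synergy (P8):
the synergies of all coalitions of `N` sum to zero. -/
theorem synergyValue_normalized_synergy (N : Finset ℕ) (v : Finset ℕ → ℝ)
    (hv : v ∅ = 0) :
    ∑ C ∈ N.powerset, synergyValue N v C = 0 := by
  simp only [synergyValue, sum_sub_distrib, sum_sum_avgShapley,
    sum_congr rfl fun C _ => sum_shapley C v hv, sub_self]
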